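/- arXiv:2209.07801 — 2 statements merged into one kernel-verified Lean document; each statement's English description precedes it below -/
import Mathlib

section
/- Let C, C', D, D' be categories and let Q : C → C', U : C → D, P : D → D', V : C' → D' be functors together with a natural isomorphism σ : Q ⋙ V ≅ U ⋙ P. Assume: Q is fully faithful and admits a right adjoint Q_* : C' → C; P is fully faithful and admits a right adjoint P_* : D' → D; V is conservative (reflects isomorphisms); and the base change transformation U ∘ Q_* → P_* ∘ V — defined as the composite U Q_* → P_* P U Q_* (unit of P ⊣ P_*) ≅ P_* V Q Q_* (via σ) → P_* V (counit of Q ⊣ Q_*) — is a natural isomorphism. Then for every object c' of C', the object c' lies in the essential image of Q if and only if V(c') lies in the essential image of P. -/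
open CategoryTheory

universe v₁ v₂ v₃ v₄ u₁ u₂ u₃ u₄

/-- Given functors `Q : C ⥤ C'`, `U : C ⥤ D`, `P : D ⥤ D'`, `V : C' ⥤ D'`
with a natural isomorphism `σ : Q ⋙ V ≅ U ⋙ P`, where `Q` and `P` are fully faithful
with right adjoints `Qs` and `Ps`, `V` is conservative, and the base change
transformation `U ∘ Q_* ⟶ P_* ∘ V` (unit of `P ⊣ Ps`, then `σ⁻¹`, then counit of
`Q ⊣ Qs`) is an isomorphism, then an object `c'` of `C'` lies in the essential image of
`Q` if and only if `V.obj c'` lies in the essential image of `P`. -/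
theorem essImage_iff_essImage_of_baseChange_isIso
    {C : Type u₁} [Category.{v₁} C] {C' : Type u₂} [Category.{v₂} C']
    {D : Type u₃} [Category.{v₃} D] {D' : Type u₄} [Category.{v₄} D']
    (Q : C ⥤ C') (U : C ⥤ D) (P : D ⥤ D') (V : C' ⥤ D')
    (σ : Q ⋙ V ≅ U ⋙ P)
    (Qs : C' ⥤ C) (adjQ : Q ⊣ Qs) [Q.Full] [Q.Faithful]
    (Ps : D' ⥤ D) (adjP : P ⊣ Ps) [P.Full] [P.Faithful]
    [V.ReflectsIsomorphisms]
    (hbc : ∀ c' : C',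
      IsIso (adjP.unit.app (U.obj (Qs.obj c')) ≫
        Ps.map (σ.inv.app (Qs.obj c')) ≫ Ps.map (V.map (adjQ.counit.app c'))))
    (c' : C') :
    Q.essImage c' ↔ P.essImage (V.obj c') := by
  constructor
  · rintro ⟨c, ⟨i⟩⟩
    exact ⟨U.obj c, ⟨(σ.symm.app c) ≪≫ V.mapIso i⟩⟩
  · intro hP
    refine (adjQ.isIso_counit_app_iff_mem_essImage).mp ?_
    have hε : IsIso (adjP.counit.app (V.obj c')) :=
      (adjP.isIso_counit_app_iff_mem_essImage).mpr hP
    have key : P.map (adjP.unit.app (U.obj (Qs.obj c')) ≫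
        Ps.map (σ.inv.app (Qs.obj c')) ≫ Ps.map (V.map (adjQ.counit.app c'))) ≫
        adjP.counit.app (V.obj c') =
        σ.inv.app (Qs.obj c') ≫ V.map (adjQ.counit.app c') := by
      simp [adjP.counit_naturality, adjP.counit_naturality_assoc,
        adjP.left_triangle_components_assoc]
    have : IsIso (σ.inv.app (Qs.obj c') ≫ V.map (adjQ.counit.app c')) := by
      rw [← key]; infer_instance
    have : IsIso (V.map (adjQ.counit.app c')) :=
      IsIso.of_isIso_comp_left (σ.inv.app (Qs.obj c')) _
    exact isIso_of_reflects_iso _ V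
end

section
/- Let C, C', D, D' be categories and let Q : C → C', U : C → D, P : D → D', V : C' → D' be functors together with a natural isomorphism σ : Q ⋙ V ≅ U ⋙ P. Assume: Q is fully faithful and admits a right adjoint Q_* : C' → C; P is fully faithful and admits a right adjoint P_* : D' → D; V is conservative (reflects isomorphisms); and the base change transformation U ∘ Q_* → P_* ∘ V — defined as the composite U Q_* → P_* P U Q_* (unit of P ⊣ P_*) ≅ P_* V Q Q_* (via σ) → P_* V (counit of Q ⊣ Q_*) — is a natural isomorphism. Let E be the pseudo-pullback category D ×_{D'} C', whose objects are triples (d, c', φ) with d an object of D, c' an object of C', and φ : P(d) ≅ V(c') an isomorphism in D', and whose morphisms (d, c', φ) → (e, b', ψ) are pairs of morphisms (α : d → e, β : c' → b') with ψ ∘ P(α) = V(β) ∘ φ. Then the canonical functor C → E sending c to (U(c), Q(c), (σ_c)^{-1}) is an equivalence of categories. -/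
/-!
The base change transformation in the hypothesis is the mate of `σ⁻¹` under `Q ⊣ Qs` and
`P ⊣ Ps`. The canonical functor is faithful and full because `Q` is: the `D`-component of a
morphism of the pseudo-pullback is forced by the `C'`-component, since `P` is faithful and the
structure morphisms are isomorphisms. An object `(d, c', φ)` is the image of `Qs c'`: the
morphism `l : U (Qs c') ⟶ d` with `P l = σ⁻¹ ≫ V ε ≫ φ⁻¹` (`ε` the counit of `Q ⊣ Qs`) has as
transpose under `P ⊣ Ps` the base change map followed by `Ps φ⁻¹`, hence is an isomorphism because
the unit of `P ⊣ Ps` is; then `V ε ≅ P l ≫ φ` is an isomorphism, and so is `ε` since `V` is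
conservative.
-/

open CategoryTheory

universe v₁ v₂ v₃ v₄ u₁ u₂ u₃ u₄

variable {C : Type u₁} [Category.{v₁} C] {C' : Type u₂} [Category.{v₂} C']
  {D : Type u₃} [Category.{v₃} D] {D' : Type u₄} [Category.{v₄} D']

/-- The pseudo-pullback (iso-comma) category `D ×_{D'} C'` of `P : D ⥤ D'` and
`V : C' ⥤ D'`: objects are triples `(d, c', φ)` with `φ : P.obj d ≅ V.obj c'`
(encoded as the full subcategory of the comma category `Comma P V` on those objects
whose structural morphism is an isomorphism); morphisms `(d, c', φ) ⟶ (e, b', ψ)` are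
pairs `(α : d ⟶ e, β : c' ⟶ b')` with `P.map α ≫ ψ = φ ≫ V.map β`. -/
def PseudoPullback (P : D ⥤ D') (V : C' ⥤ D') : Type _ :=
  ObjectProperty.FullSubcategory (fun Z : Comma P V => IsIso Z.hom)

instance (P : D ⥤ D') (V : C' ⥤ D') : Category (PseudoPullback P V) :=
  inferInstanceAs <| Category (ObjectProperty.FullSubcategory (fun Z : Comma P V => IsIso Z.hom))

@[simps]
def canonicalToPseudoPullback (Q : C ⥤ C') (U : C ⥤ D) (P : D ⥤ D') (V : C' ⥤ D')
    (σ : Q ⋙ V ≅ U ⋙ P) : C ⥤ PseudoPullback P V where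
  obj c := ⟨⟨U.obj c, Q.obj c, σ.inv.app c⟩, inferInstance⟩
  map {c c₁} f :=
    { hom :=
      { left := U.map f
        right := Q.map f
        w := σ.inv.naturality f } }

namespace PseudoPullback

variable {P : D ⥤ D'} {V : C' ⥤ D'}

lemma hom_ext_of_right [P.Faithful] {X Y : PseudoPullback P V} {f g : X ⟶ Y}
    (h : f.hom.right = g.hom.right) : f = g := by
  have : IsIso Y.obj.hom := Y.property
  have hleft : P.map f.hom.left = P.map g.hom.left := by
    rw [← cancel_mono Y.obj.hom, f.hom.w, g.hom.w, h]
  exact ObjectProperty.hom_ext _ (CommaMorphism.ext (P.map_injective hleft) h)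

end PseudoPullback

lemma CategoryTheory.Adjunction.isIso_of_isIso_map_map {P : D ⥤ D'} {Ps : D' ⥤ D} (adj : P ⊣ Ps)
    [IsIso adj.unit] {d e : D} (f : d ⟶ e) [IsIso (Ps.map (P.map f))] : IsIso f :=
  (NatIso.isIso_map_iff (asIso adj.unit) f).2 ‹_›

section

variable {Q : C ⥤ C'} {U : C ⥤ D} {P : D ⥤ D'} {V : C' ⥤ D'} (σ : Q ⋙ V ≅ U ⋙ P)

instance canonicalToPseudoPullback_faithful [Q.Faithful] :
    (canonicalToPseudoPullback Q U P V σ).Faithful where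
  map_injective h := Q.map_injective (congrArg (fun k => k.hom.right) h)

instance canonicalToPseudoPullback_full [Q.Full] [P.Faithful] :
    (canonicalToPseudoPullback Q U P V σ).Full where
  map_surjective φ := ⟨Q.preimage φ.hom.right,
    PseudoPullback.hom_ext_of_right (Q.map_preimage φ.hom.right)⟩

lemma canonicalToPseudoPullback_essSurj [P.Full] [P.Faithful] [V.ReflectsIsomorphisms]
    {Qs : C' ⥤ C} {Ps : D' ⥤ D} (adjQ : Q ⊣ Qs) (adjP : P ⊣ Ps)
    (hmate : ∀ c', IsIso ((mateEquiv adjQ adjP (TwoSquare.mk _ _ _ _ σ.inv)).app c')) :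
    (canonicalToPseudoPullback Q U P V σ).EssSurj where
  mem_essImage X := by
    obtain ⟨⟨d, c', φ⟩, (hφ : IsIso φ)⟩ := X
    obtain ⟨l, hl⟩ :=
      P.map_surjective (σ.inv.app (Qs.obj c') ≫ V.map (adjQ.counit.app c') ≫ inv φ)
    have hunit_comp : adjP.unit.app _ ≫ Ps.map (P.map l) =
        (mateEquiv adjQ adjP (TwoSquare.mk _ _ _ _ σ.inv)).app c' ≫ Ps.map (inv φ) := by
      simp [mateEquiv_apply, hl]
    have : IsIso (Ps.map (P.map l)) := by
      have := hmate c'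
      have : IsIso (adjP.unit.app _ ≫ Ps.map (P.map l)) := hunit_comp ▸ inferInstance
      exact IsIso.of_isIso_comp_left (adjP.unit.app _) _
    have : IsIso l := adjP.isIso_of_isIso_map_map l
    have : IsIso (adjQ.counit.app c') := by
      have : IsIso (V.map (adjQ.counit.app c')) := by
        rw [show V.map (adjQ.counit.app c') = σ.hom.app (Qs.obj c') ≫ P.map l ≫ φ by simp [hl]]
        infer_instance
      exact isIso_of_reflects_iso (adjQ.counit.app c') V
    have hw : P.map l ≫ φ = σ.inv.app (Qs.obj c') ≫ V.map (adjQ.counit.app c') := by simp [hl]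
    let e₁ : U.obj (Qs.obj c') ≅ d := asIso l
    let e₂ : Q.obj (Qs.obj c') ≅ c' := asIso (adjQ.counit.app c')
    exact ⟨Qs.obj c', ⟨ObjectProperty.isoMk _ (Comma.isoMk e₁ e₂ hw)⟩⟩

end

/-- Given functors `Q : C ⥤ C'`, `U : C ⥤ D`, `P : D ⥤ D'`, `V : C' ⥤ D'`
with a natural isomorphism `σ : Q ⋙ V ≅ U ⋙ P`, where `Q` and `P` are fully faithful
with right adjoints `Qs` and `Ps`, `V` is conservative, and the base change
transformation `U ∘ Q_* ⟶ P_* ∘ V` (unit of `P ⊣ Ps`, then `σ⁻¹`, then counit of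
`Q ⊣ Qs`) is an isomorphism, the canonical functor from `C` to the pseudo-pullback
`D ×_{D'} C'`, sending `c` to `(U.obj c, Q.obj c, (σ.app c)⁻¹)`, is an equivalence of
categories. -/
theorem canonicalToPseudoPullback_isEquivalence
    (Q : C ⥤ C') (U : C ⥤ D) (P : D ⥤ D') (V : C' ⥤ D')
    (σ : Q ⋙ V ≅ U ⋙ P)
    (Qs : C' ⥤ C) (adjQ : Q ⊣ Qs) [Q.Full] [Q.Faithful]
    (Ps : D' ⥤ D) (adjP : P ⊣ Ps) [P.Full] [P.Faithful]
    [V.ReflectsIsomorphisms]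
    (hbc : ∀ c' : C',
      IsIso (adjP.unit.app (U.obj (Qs.obj c')) ≫
        Ps.map (σ.inv.app (Qs.obj c')) ≫ Ps.map (V.map (adjQ.counit.app c')))) :
    (canonicalToPseudoPullback Q U P V σ).IsEquivalence := by
  have := canonicalToPseudoPullback_essSurj σ adjQ adjP fun c' => by
    simpa [mateEquiv_apply] using hbc c'
  exact { }
end
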